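/- arXiv:1412.2455 — 4 statements merged into one kernel-verified Lean document; each statement's English description precedes it below -/
import Mathlib

section
/- Let p₀, g₀ > 0, K₀ > 0, K₁ > 0, g₁ > 0, σ₀² > 0, σ₁² > 0 be reals and N₀ ≥ 1, N₁ ≥ 1 integers. Set v₀ = p₀g₀/(1+K₀) + σ₀² and assume σ₁² < v₀. Let p* = (K₁+1)(v₀ − σ₁²)/g₁ and define L(N₁) = √(p₀g₀K₀/(1+K₀)) · √((1+K₁)/(p*·g₁·K₁)) · √(N₀/N₁). Then L(N₁) ≤ 1 if and only if N₁ ≥ p₀g₀K₀N₀ / (K₁·(p₀g₀ + (1+K₀)(σ₀² − σ₁²))). -/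
/-!
Substituting `p*` gives `p* g₁ K₁ / (1 + K₁) = K₁ (v₀ - σ₁²)`, and
`(1 + K₀)(v₀ - σ₁²) = p₀g₀ + (1 + K₀)(σ₀² - σ₁²)`, so the radicand of `L(N₁)` collapses to
`N₁* / N₁`. Hence `L(N₁) ≤ 1` exactly when `N₁* ≤ N₁`.
-/

lemma feasibility_radicand_eq {p₀ g₀ K₀ K₁ g₁ σ₀sq σ₁sq v₀ pstar : ℝ} (N₀ n : ℝ)
    (hK₀ : 0 < K₀) (hK₁ : 0 < K₁) (hg₁ : 0 < g₁)
    (hv₀ : v₀ = p₀ * g₀ / (1 + K₀) + σ₀sq) (hσv : σ₁sq < v₀)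
    (hpstar : pstar = (K₁ + 1) * (v₀ - σ₁sq) / g₁) :
    p₀ * g₀ * K₀ / (1 + K₀) * ((1 + K₁) / (pstar * g₁ * K₁)) * (N₀ / n) =
      p₀ * g₀ * K₀ * N₀ / (K₁ * (p₀ * g₀ + (1 + K₀) * (σ₀sq - σ₁sq))) / n := by
  have hgap : v₀ - σ₁sq ≠ 0 := (sub_pos.mpr hσv).ne'
  have hnoise : p₀ * g₀ + (1 + K₀) * (σ₀sq - σ₁sq) = (1 + K₀) * (v₀ - σ₁sq) := by
    rw [hv₀]
    field_simp
    ring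
  rw [hnoise, hpstar]
  field_simp
  ring

theorem stmt_3_general (p₀ g₀ K₀ K₁ g₁ σ₀sq σ₁sq : ℝ)
    (hp₀ : 0 < p₀) (hg₀ : 0 < g₀) (hK₀ : 0 < K₀) (hK₁ : 0 < K₁) (hg₁ : 0 < g₁)
    (N₀ N₁ : ℕ) (hN₁ : 1 ≤ N₁)
    (v₀ : ℝ) (hv₀ : v₀ = p₀ * g₀ / (1 + K₀) + σ₀sq) (hσv : σ₁sq < v₀)
    (pstar : ℝ) (hpstar : pstar = (K₁ + 1) * (v₀ - σ₁sq) / g₁)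
    (L : ℕ → ℝ)
    (hL : ∀ n : ℕ, L n = Real.sqrt (p₀ * g₀ * K₀ / (1 + K₀)) *
      Real.sqrt ((1 + K₁) / (pstar * g₁ * K₁)) * Real.sqrt ((N₀ : ℝ) / (n : ℝ))) :
    L N₁ ≤ 1 ↔
      (N₁ : ℝ) ≥ p₀ * g₀ * K₀ * N₀ / (K₁ * (p₀ * g₀ + (1 + K₀) * (σ₀sq - σ₁sq))) := by
  have hN₁pos : (0 : ℝ) < N₁ := by exact_mod_cast hN₁
  have hA : 0 ≤ p₀ * g₀ * K₀ / (1 + K₀) := by positivity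
  rw [hL, ← Real.sqrt_mul hA, ← Real.sqrt_mul' _ (by positivity),
    feasibility_radicand_eq _ _ hK₀ hK₁ hg₁ hv₀ hσv hpstar, Real.sqrt_le_one,
    div_le_one hN₁pos, ge_iff_le]

/-- Feasibility condition `L(N₁) ≤ 1` for the optimal beamformer is equivalent to the
critical antenna-number bound `N₁ ≥ N₁*`. -/
theorem stmt_3 (p₀ g₀ K₀ K₁ g₁ σ₀sq σ₁sq : ℝ)
    (hp₀ : 0 < p₀) (hg₀ : 0 < g₀) (hK₀ : 0 < K₀) (hK₁ : 0 < K₁) (hg₁ : 0 < g₁)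
    (hσ₀ : 0 < σ₀sq) (hσ₁ : 0 < σ₁sq)
    (N₀ N₁ : ℕ) (hN₀ : 1 ≤ N₀) (hN₁ : 1 ≤ N₁)
    (v₀ : ℝ) (hv₀ : v₀ = p₀ * g₀ / (1 + K₀) + σ₀sq) (hσv : σ₁sq < v₀)
    (pstar : ℝ) (hpstar : pstar = (K₁ + 1) * (v₀ - σ₁sq) / g₁)
    (L : ℕ → ℝ)
    (hL : ∀ n : ℕ, L n = Real.sqrt (p₀ * g₀ * K₀ / (1 + K₀)) *
      Real.sqrt ((1 + K₁) / (pstar * g₁ * K₁)) * Real.sqrt ((N₀ : ℝ) / (n : ℝ))) :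
    L N₁ ≤ 1 ↔
      (N₁ : ℝ) ≥ p₀ * g₀ * K₀ * N₀ / (K₁ * (p₀ * g₀ + (1 + K₀) * (σ₀sq - σ₁sq))) :=
  stmt_3_general p₀ g₀ K₀ K₁ g₁ σ₀sq σ₁sq hp₀ hg₀ hK₀ hK₁ hg₁ N₀ N₁ hN₁ v₀ hv₀ hσv pstar hpstar L hL
end

section
/- Let p₀, g₀, g₁ > 0, K₀ > 0, K₁ > 0, σ₀², σ₁² > 0 be reals, N_B, N₀, N₁ ≥ 1 integers, v₀ = p₀g₀/(1+K₀) + σ₀². Let r₀, r₁ ∈ ℂ^{N_B} and t₁ ∈ ℂ^{N₁} be vectors all of whose entries have modulus 1, m₀ = √(p₀g₀K₀N₀/(1+K₀))·r₀, and for p ≥ 0, b ∈ ℂ^{N₁} set m₁(p,b) = √(p·g₁·K₁/(1+K₁))·(Σ_k (t₁)_k b_k)·r₁, v₁(p) = p·g₁/(1+K₁) + σ₁², and F(p,b) = N_B·(v₁(p)/v₀ − 1 − ln(v₁(p)/v₀)) + ‖m₀ − m₁(p,b)‖²/v₀. Then for every p ≥ 0 and every b ∈ ℂ^{N₁} with ‖b‖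 = 1, F(p,b) ≥ (p₀g₀K₀N₀/((1+K₀)·v₀))·(N_B − |⟨r₁,r₀⟩|²/N_B). -/
/-! The divergence splits into `N_B (x - 1 - log x)` with `x = v₁/v₀`, nonnegative because
`log x ≤ x - 1`, and `‖A r₀ - c r₁‖² / v₀`, where `A² = p₀g₀K₀N₀/(1+K₀)` and the scalar `c`
carries all dependence on `p` and `b`. Whatever `c` is, `‖A r₀ - c r₁‖²` is at least the squared
distance from `A r₀` to the complex line through `r₁`, which by Pythagoras is
`A² (‖r₀‖² - |⟨r₁, r₀⟩|² / ‖r₁‖²)`, and unimodular entries give `‖r₀‖² = ‖r₁‖² = N_B`. -/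

open scoped InnerProductSpace

section
variable {𝕜 E : Type*} [RCLike 𝕜] [NormedAddCommGroup E] [InnerProductSpace 𝕜 E]

theorem norm_starProjection_singleton_sq (y x : E) :
    ‖(𝕜 ∙ y).starProjection x‖ ^ 2 = ‖⟪y, x⟫_𝕜‖ ^ 2 / ‖y‖ ^ 2 := by
  rw [Submodule.starProjection_singleton, norm_smul, norm_div, RCLike.norm_ofReal,
    abs_of_nonneg (by positivity)]
  rcases eq_or_ne ‖y‖ 0 with hy | hy
  · simp [hy]
  · field_simp

theorem norm_sq_sub_inner_sq_div_le_norm_sub_smul_sq (x y : E) (c : 𝕜) :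
    ‖x‖ ^ 2 - ‖⟪y, x⟫_𝕜‖ ^ 2 / ‖y‖ ^ 2 ≤ ‖x - c • y‖ ^ 2 := by
  set P := (𝕜 ∙ y).starProjection
  have hperp : ∀ w ∈ 𝕜 ∙ y, ⟪x - P x, w⟫_𝕜 = 0 := Submodule.starProjection_inner_eq_zero x
  have hPx : P x ∈ 𝕜 ∙ y := Submodule.starProjection_apply_mem _ x
  have hsplit : x - c • y = (x - P x) + (P x - c • y) := by abel
  have hx := norm_add_sq_eq_norm_sq_add_norm_sq_of_inner_eq_zero (x - P x) (P x) (hperp _ hPx)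
  have hcy : c • y ∈ 𝕜 ∙ y := Submodule.smul_mem _ c (Submodule.mem_span_singleton_self y)
  have hxc := norm_add_sq_eq_norm_sq_add_norm_sq_of_inner_eq_zero (x - P x) (P x - c • y)
    (hperp _ (Submodule.sub_mem _ hPx hcy))
  rw [sub_add_cancel] at hx
  rw [← norm_starProjection_singleton_sq, hsplit]
  nlinarith [sq_nonneg ‖P x - c • y‖]

theorem EuclideanSpace.norm_sq_toLp_of_forall_norm_eq_one {n : Type*} [Fintype n] {r : n → 𝕜}
    (hr : ∀ j, ‖r j‖ = 1) : ‖WithLp.toLp 2 r‖ ^ 2 = Fintype.card n := by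
  simp [EuclideanSpace.norm_sq_eq, hr]

end

theorem sq_mul_sub_inner_sq_div_le_sum_norm_sub_sq {n : ℕ} (A : ℝ) (c : ℂ) {r₀ r₁ : Fin n → ℂ}
    (hr₀ : ∀ j, ‖r₀ j‖ = 1) (hr₁ : ∀ j, ‖r₁ j‖ = 1) :
    A ^ 2 * (n - ‖∑ j, (starRingEnd ℂ) (r₁ j) * r₀ j‖ ^ 2 / n) ≤
      ∑ j, ‖A * r₀ j - c * r₁ j‖ ^ 2 := by
  set x : EuclideanSpace ℂ (Fin n) := WithLp.toLp 2 r₀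
  set y : EuclideanSpace ℂ (Fin n) := WithLp.toLp 2 r₁
  have hsum : ∑ j, ‖A * r₀ j - c * r₁ j‖ ^ 2 = ‖(A : ℂ) • x - c • y‖ ^ 2 := by
    simp [EuclideanSpace.norm_sq_eq, x, y]
  have hinner : ⟪y, (A : ℂ) • x⟫_ℂ = A * ∑ j, (starRingEnd ℂ) (r₁ j) * r₀ j := by
    simp [PiLp.inner_apply, x, y, mul_comm]
  have hproj := norm_sq_sub_inner_sq_div_le_norm_sub_smul_sq ((A : ℂ) • x) y c
  rw [hinner, norm_smul, mul_pow, norm_mul, mul_pow,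
    EuclideanSpace.norm_sq_toLp_of_forall_norm_eq_one hr₀,
    EuclideanSpace.norm_sq_toLp_of_forall_norm_eq_one hr₁, Fintype.card_fin,
    Complex.norm_real, Real.norm_eq_abs, sq_abs] at hproj
  rwa [hsum, mul_sub, mul_div_assoc']

theorem stmt_9_general (p₀ g₀ g₁ K₀ K₁ σ₀sq σ₁sq : ℝ)
    (hp₀ : 0 < p₀) (hg₀ : 0 < g₀) (hg₁ : 0 < g₁) (hK₀ : 0 < K₀) (hK₁ : 0 < K₁)
    (hσ₀ : 0 < σ₀sq) (hσ₁ : 0 < σ₁sq)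
    (NB N₀ N₁ : ℕ)
    (v₀ : ℝ) (hv₀ : v₀ = p₀ * g₀ / (1 + K₀) + σ₀sq)
    (r₀ r₁ : Fin NB → ℂ) (t₁ : Fin N₁ → ℂ)
    (hr₀ : ∀ j, ‖r₀ j‖ = 1) (hr₁ : ∀ j, ‖r₁ j‖ = 1)
    (m₀ : Fin NB → ℂ)
    (hm₀ : ∀ j, m₀ j = (Real.sqrt (p₀ * g₀ * K₀ * N₀ / (1 + K₀)) : ℂ) * r₀ j)
    (m₁ : ℝ → (Fin N₁ → ℂ) → Fin NB → ℂ)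
    (hm₁ : ∀ p b j, m₁ p b j =
      (Real.sqrt (p * g₁ * K₁ / (1 + K₁)) : ℂ) * (∑ k, t₁ k * b k) * r₁ j)
    (v₁ : ℝ → ℝ) (hv₁ : ∀ p, v₁ p = p * g₁ / (1 + K₁) + σ₁sq)
    (F : ℝ → (Fin N₁ → ℂ) → ℝ)
    (hF : ∀ p b, F p b = (NB : ℝ) * (v₁ p / v₀ - 1 - Real.log (v₁ p / v₀)) +
      (∑ j, ‖m₀ j - m₁ p b j‖ ^ 2) / v₀) :
    ∀ p : ℝ, 0 ≤ p → ∀ b : Fin N₁ → ℂ, (∑ k, ‖b k‖ ^ 2) = 1 →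
      F p b ≥ p₀ * g₀ * K₀ * N₀ / ((1 + K₀) * v₀) *
        ((NB : ℝ) - ‖∑ j, (starRingEnd ℂ) (r₁ j) * r₀ j‖ ^ 2 / NB) := by
  intro p hp b _
  have hv₀pos : 0 < v₀ := by rw [hv₀]; positivity
  have hv₁pos : 0 < v₁ p := by rw [hv₁]; positivity
  have hlog : 0 ≤ (NB : ℝ) * (v₁ p / v₀ - 1 - Real.log (v₁ p / v₀)) :=
    mul_nonneg NB.cast_nonneg
      (by linarith [Real.log_le_sub_one_of_pos (div_pos hv₁pos hv₀pos)])
  set A := Real.sqrt (p₀ * g₀ * K₀ * N₀ / (1 + K₀))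
  set c := (Real.sqrt (p * g₁ * K₁ / (1 + K₁)) : ℂ) * ∑ k, t₁ k * b k
  have hdiff : ∀ j, m₀ j - m₁ p b j = A * r₀ j - c * r₁ j := fun j => by rw [hm₀, hm₁]
  have hmean := sq_mul_sub_inner_sq_div_le_sum_norm_sub_sq A c hr₀ hr₁
  rw [Real.sq_sqrt (by positivity)] at hmean
  simp_rw [← hdiff] at hmean
  rw [hF, ge_iff_le]
  exact (le_of_eq (by rw [← div_div]; ring)).trans
    (add_le_add hlog (div_le_div_of_nonneg_right hmean hv₀pos.le))

/-- Worst-case lower bound: for every admissible power `p ≥ 0` and unit beamformer `b`,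
the KL divergence `F(p,b)` is at least the minimum value of Eq. (KL_minimum_xt). -/
theorem stmt_9 (p₀ g₀ g₁ K₀ K₁ σ₀sq σ₁sq : ℝ)
    (hp₀ : 0 < p₀) (hg₀ : 0 < g₀) (hg₁ : 0 < g₁) (hK₀ : 0 < K₀) (hK₁ : 0 < K₁)
    (hσ₀ : 0 < σ₀sq) (hσ₁ : 0 < σ₁sq)
    (NB N₀ N₁ : ℕ) (hNB : 1 ≤ NB) (hN₀ : 1 ≤ N₀) (hN₁ : 1 ≤ N₁)
    (v₀ : ℝ) (hv₀ : v₀ = p₀ * g₀ / (1 + K₀) + σ₀sq)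
    (r₀ r₁ : Fin NB → ℂ) (t₁ : Fin N₁ → ℂ)
    (hr₀ : ∀ j, ‖r₀ j‖ = 1) (hr₁ : ∀ j, ‖r₁ j‖ = 1)
    (ht₁ : ∀ k, ‖t₁ k‖ = 1)
    (m₀ : Fin NB → ℂ)
    (hm₀ : ∀ j, m₀ j = (Real.sqrt (p₀ * g₀ * K₀ * N₀ / (1 + K₀)) : ℂ) * r₀ j)
    (m₁ : ℝ → (Fin N₁ → ℂ) → Fin NB → ℂ)
    (hm₁ : ∀ p b j, m₁ p b j =
      (Real.sqrt (p * g₁ * K₁ / (1 + K₁)) : ℂ) * (∑ k, t₁ k * b k) * r₁ j)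
    (v₁ : ℝ → ℝ) (hv₁ : ∀ p, v₁ p = p * g₁ / (1 + K₁) + σ₁sq)
    (F : ℝ → (Fin N₁ → ℂ) → ℝ)
    (hF : ∀ p b, F p b = (NB : ℝ) * (v₁ p / v₀ - 1 - Real.log (v₁ p / v₀)) +
      (∑ j, ‖m₀ j - m₁ p b j‖ ^ 2) / v₀) :
    ∀ p : ℝ, 0 ≤ p → ∀ b : Fin N₁ → ℂ, (∑ k, ‖b k‖ ^ 2) = 1 →
      F p b ≥ p₀ * g₀ * K₀ * N₀ / ((1 + K₀) * v₀) *
        ((NB : ℝ) - ‖∑ j, (starRingEnd ℂ) (r₁ j) * r₀ j‖ ^ 2 / NB) :=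
  stmt_9_general p₀ g₀ g₁ K₀ K₁ σ₀sq σ₁sq hp₀ hg₀ hg₁ hK₀ hK₁ hσ₀ hσ₁ NB N₀ N₁ v₀ hv₀ r₀ r₁ t₁ hr₀
    hr₁ m₀ hm₀ m₁ hm₁ v₁ hv₁ F hF
end

section
/- Let T ≥ 1 and N ≥ 1 be integers, and for each t ∈ {1,…,T} let v(t) > 0 and m₀(t), m₁(t) ∈ ℂ^N, with m₁(t) ≠ m₀(t) for at least one t; set D = Σ_{t=1}^T ‖m₁(t) − m₀(t)‖²/v(t) > 0. For m ∈ ℂ^N and v > 0 let f_{m,v}(y) = (π v)^{−N}·exp(−‖y − m‖²/v) and μ_{m,v} the probability measure on ℂ^N ≅ ℝ^{2N} with this density, and let μ_k = ⊗_{t=1}^T μ_{m_k(t),v(t)} (k = 0,1) be the product measures on (ℂ^N)^T. Let Q(x) = ∫_x^∞ (2π)^{−1/2}·e^{−t²/2} dt. Then for every λ > 0: (i) μ₀{ (y(1),…,y(T)) : Π_{t=1}^T f_{m₁(t),v(t)}(y(t)) / Π_{t=1}^T f_{m₀(t),v(t)}(y(t)) > λ } = Q((ln λ + D)/√(2D));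 (ii) μ₁ of the same event equals Q((ln λ − D)/√(2D)). -/
open scoped BigOperators
open MeasureTheory

open Real ProbabilityTheory
open scoped NNReal ENNReal ComplexConjugate

/-
The log-likelihood ratio `L(Y) = ∑ₜ ∑ⱼ (‖Yₜⱼ - m₀ₜⱼ‖² - ‖Yₜⱼ - m₁ₜⱼ‖²) / vₜ` is affine in `Y`:
with `δ = m₁ - m₀` its coordinate terms are `Re (conj (2δ / v) * y)` plus a constant. A circularly
symmetric complex Gaussian of covariance `v` has independent real and imaginary parts of variance
`v / 2`, so under a product of such Gaussians with means `a` the statistic `L` is a real Gaussian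
with mean `L(a)` and variance `∑ 2‖δ‖² / v = 2D`. The LRT event is `L > ln λ`, and `L(m₀) = -D`,
`L(m₁) = D`, which gives the two Gaussian tails.
-/

theorem lintegral_fin_nat_prod_eq_prod {n : ℕ} {E : Type*} [MeasurableSpace E]
    {μ : Fin n → Measure E} [∀ i, SigmaFinite (μ i)] {f : Fin n → E → ℝ≥0∞}
    (hf : ∀ i, Measurable (f i)) :
    ∫⁻ x, ∏ i, f i (x i) ∂(Measure.pi μ) = ∏ i, ∫⁻ x, f i x ∂(μ i) := by
  induction n with
  | zero => simp
  | succ n ih =>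
    calc
      _ = ∫⁻ x : E × (Fin n → E), f 0 x.1 * ∏ i : Fin n, f i.succ (x.2 i)
            ∂((μ 0).prod (Measure.pi fun i => μ i.succ)) := by
        rw [← ((measurePreserving_piFinSuccAbove μ 0).symm).lintegral_comp_emb
          (MeasurableEquiv.measurableEmbedding _)]
        simp_rw [MeasurableEquiv.piFinSuccAbove_symm_apply, Fin.insertNthEquiv,
          Fin.prod_univ_succ, Fin.insertNth_zero, Equiv.coe_fn_mk, Fin.cons_succ,
          Fin.zero_succAbove, cast_eq, Fin.cons_zero]
      _ = (∫⁻ x, f 0 x ∂μ 0) * ∏ i : Fin n, ∫⁻ x, f i.succ x ∂(μ i.succ) := by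
        rw [← ih fun i => hf i.succ, ← lintegral_prod_mul (hf 0).aemeasurable
          (Finset.measurable_prod _ fun i _ => (hf i.succ).comp (measurable_pi_apply i)).aemeasurable]
      _ = ∏ i, ∫⁻ x, f i x ∂(μ i) := by rw [Fin.prod_univ_succ]

theorem lintegral_fintype_prod_eq_prod {ι : Type*} [Fintype ι] {E : Type*} [MeasurableSpace E]
    {μ : ι → Measure E} [∀ i, SigmaFinite (μ i)] {f : ι → E → ℝ≥0∞}
    (hf : ∀ i, Measurable (f i)) :
    ∫⁻ x, ∏ i, f i (x i) ∂(Measure.pi μ) = ∏ i, ∫⁻ x, f i x ∂(μ i) := by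
  let e := (Fintype.equivFin ι).symm
  rw [← (measurePreserving_piCongrLeft _ e).lintegral_comp_emb
    (MeasurableEquiv.measurableEmbedding _)]
  simp_rw [← e.prod_comp, MeasurableEquiv.coe_piCongrLeft, Equiv.piCongrLeft_apply_apply]
  exact lintegral_fin_nat_prod_eq_prod fun i => hf (e i)

theorem Measure.pi_withDensity {ι : Type*} [Fintype ι] {E : Type*} [MeasurableSpace E]
    (μ : ι → Measure E) [∀ i, SigmaFinite (μ i)] {f : ι → E → ℝ≥0∞}
    (hf : ∀ i, Measurable (f i)) [∀ i, SigmaFinite ((μ i).withDensity (f i))] :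
    Measure.pi (fun i => (μ i).withDensity (f i))
      = (Measure.pi μ).withDensity (fun x => ∏ i, f i (x i)) := by
  refine Measure.pi_eq fun s hs => ?_
  rw [withDensity_apply _ (MeasurableSet.univ_pi hs), Measure.restrict_pi_pi,
    lintegral_fintype_prod_eq_prod hf]
  exact Finset.prod_congr rfl fun i _ => (withDensity_apply _ (hs i)).symm

lemma MeasurableEquiv.map_withDensity_comp {α β : Type*} [MeasurableSpace α] [MeasurableSpace β]
    (e : α ≃ᵐ β) (μ : Measure α) {g : β → ℝ≥0∞} (hg : Measurable g) :
    (μ.withDensity (g ∘ e)).map e = (μ.map e).withDensity g := by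
  ext s hs
  rw [withDensity_apply _ hs, e.map_apply, withDensity_apply _ (e.measurable hs),
    setLIntegral_map hs hg e.measurable]
  rfl

lemma map_pi_sum_eq_gaussianReal {ι : Type*} [Fintype ι] {Ω : ι → Type*}
    [∀ i, MeasurableSpace (Ω i)] (ν : ∀ i, Measure (Ω i)) [∀ i, IsProbabilityMeasure (ν i)]
    {g : ∀ i, Ω i → ℝ} (hg : ∀ i, Measurable (g i)) {m : ι → ℝ} {w : ι → ℝ≥0}
    (h : ∀ i, (ν i).map (g i) = gaussianReal (m i) (w i)) :
    (Measure.pi ν).map (fun x => ∑ i, g i (x i)) = gaussianReal (∑ i, m i) (∑ i, w i) := by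
  classical
  have hmarginal : ∀ i, (Measure.pi ν).map (fun x => g i (x i)) = gaussianReal (m i) (w i) := by
    intro i
    rw [← h i, ← (measurePreserving_eval ν i).map_eq, Measure.map_map (hg i) (measurable_pi_apply i)]
    rfl
  have hmeas : ∀ i, AEMeasurable (fun x : ∀ i, Ω i => g i (x i)) (Measure.pi ν) :=
    fun i => ((hg i).comp (measurable_pi_apply i)).aemeasurable
  refine Measure.ext_of_charFun ?_
  rw [(iIndepFun_pi fun i => (hg i).aemeasurable).charFun_map_fun_sum_eq_prod hmeas]
  ext t
  simp only [Finset.prod_apply, hmarginal, charFun_gaussianReal, ← Complex.exp_sum]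
  push_cast
  simp only [Finset.sum_sub_distrib, Finset.mul_sum, Finset.sum_mul, Finset.sum_div]

lemma map_prod_add_eq_gaussianReal {α β : Type*} [MeasurableSpace α] [MeasurableSpace β]
    (μ : Measure α) (ν : Measure β) [SFinite μ] [SFinite ν] {f : α → ℝ} {g : β → ℝ}
    (hf : Measurable f) (hg : Measurable g) {m₁ m₂ : ℝ} {v₁ v₂ : ℝ≥0}
    (hμ : μ.map f = gaussianReal m₁ v₁) (hν : ν.map g = gaussianReal m₂ v₂) :
    (μ.prod ν).map (fun p => f p.1 + g p.2) = gaussianReal (m₁ + m₂) (v₁ + v₂) := by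
  rw [← gaussianReal_conv_gaussianReal, ← hμ, ← hν, Measure.conv, Measure.map_prod_map _ _ hf hg,
    Measure.map_map (by fun_prop) (hf.prodMap hg)]
  rfl

lemma gaussianReal_Ioi (m : ℝ) {w : ℝ≥0} (hw : w ≠ 0) (x : ℝ) :
    gaussianReal m w (Set.Ioi x)
      = ENNReal.ofReal (∫ s in Set.Ioi ((x - m) / √w), exp (-s ^ 2 / 2) / √(2 * π)) := by
  have hsqrt : 0 < √(w : ℝ) := Real.sqrt_pos.2 (by positivity)
  have hstd : (gaussianReal 0 1).map (fun s => √w * s + m) = gaussianReal m w := by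
    rw [show (fun s => √w * s + m) = (· + m) ∘ (√w * ·) from rfl,
      ← Measure.map_map (by fun_prop) (by fun_prop), gaussianReal_map_const_mul,
      gaussianReal_map_add_const, mul_zero, zero_add, mul_one]
    congr
    exact Real.sq_sqrt w.2
  have hpreimage : (fun s => √w * s + m) ⁻¹' Set.Ioi x = Set.Ioi ((x - m) / √w) := by
    ext s
    simp only [Set.mem_preimage, Set.mem_Ioi, div_lt_iff₀ hsqrt]
    constructor <;> intro h <;> linarith
  rw [← hstd, Measure.map_apply (by fun_prop) measurableSet_Ioi, hpreimage,
    gaussianReal_apply_eq_integral _ one_ne_zero]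
  congr 1
  refine setIntegral_congr_fun measurableSet_Ioi fun s _ => ?_
  simp [gaussianPDFReal, div_eq_inv_mul]

/-- The circularly-symmetric complex Gaussian `CN(a, w)` of mean `a` and variance `w`. -/
noncomputable def complexGaussian (a : ℂ) (w : ℝ≥0) : Measure ℂ :=
  ((gaussianReal a.re (w / 2)).prod (gaussianReal a.im (w / 2))).map
    Complex.measurableEquivRealProd.symm

instance (a : ℂ) (w : ℝ≥0) : IsProbabilityMeasure (complexGaussian a w) :=
  Measure.isProbabilityMeasure_map (MeasurableEquiv.measurable _).aemeasurable

lemma complexGaussian_map_re_conj_mul (a c : ℂ) (w : ℝ≥0) :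
    (complexGaussian a w).map (fun z => (conj c * z).re)
      = gaussianReal (conj c * a).re (‖c‖₊ ^ 2 * (w / 2)) := by
  have hmean : (conj c * a).re = c.re * a.re + c.im * a.im := by simp
  rw [complexGaussian, Measure.map_map (by fun_prop) (MeasurableEquiv.measurable _), hmean]
  convert map_prod_add_eq_gaussianReal _ _ (measurable_const_mul c.re) (measurable_const_mul c.im)
    (gaussianReal_map_const_mul _) (gaussianReal_map_const_mul _) using 2
  · ext p
    simp [Complex.measurableEquivRealProd]
  · ext
    simp only [NNReal.coe_mul, NNReal.coe_pow, coe_nnnorm, NNReal.coe_div, NNReal.coe_ofNat,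
      NNReal.coe_add, NNReal.coe_mk, ← Complex.normSq_eq_norm_sq, Complex.normSq_apply]
    ring

lemma complexGaussian_map_sq_norm_sub_sub (a b₀ b₁ : ℂ) (w : ℝ≥0) :
    (complexGaussian a w).map (fun z => (‖z - b₀‖ ^ 2 - ‖z - b₁‖ ^ 2) / w)
      = gaussianReal ((‖a - b₀‖ ^ 2 - ‖a - b₁‖ ^ 2) / w) (2 * ‖b₁ - b₀‖₊ ^ 2 / w) := by
  set c : ℂ := ((2 / w : ℝ) : ℂ) * (b₁ - b₀)
  set k : ℝ := (‖b₀‖ ^ 2 - ‖b₁‖ ^ 2) / w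
  have haffine : ∀ z : ℂ, (‖z - b₀‖ ^ 2 - ‖z - b₁‖ ^ 2) / w = (conj c * z).re + k := by
    intro z
    simp only [c, k, Complex.sq_norm, Complex.normSq_apply, map_mul, Complex.conj_ofReal,
      Complex.mul_re, Complex.mul_im, Complex.ofReal_re, Complex.ofReal_im, Complex.conj_re,
      Complex.conj_im, Complex.sub_re, Complex.sub_im]
    ring
  have hvar : ‖c‖₊ ^ 2 * (w / 2) = 2 * ‖b₁ - b₀‖₊ ^ 2 / w := by
    rcases eq_or_ne w 0 with rfl | hw
    · simp
    ext
    push_cast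
    simp only [c, norm_mul, Complex.norm_real, Real.norm_eq_abs, mul_pow, sq_abs]
    field_simp
  rw [funext haffine, haffine, ← hvar, ← gaussianReal_map_add_const,
    ← complexGaussian_map_re_conj_mul, Measure.map_map (by fun_prop) (by fun_prop)]
  rfl

lemma gaussianPDFReal_re_mul_gaussianPDFReal_im (a : ℂ) (w : ℝ≥0) (x y : ℝ) :
    gaussianPDFReal a.re (w / 2) x * gaussianPDFReal a.im (w / 2) y
      = (π * w)⁻¹ * exp (-‖(⟨x, y⟩ : ℂ) - a‖ ^ 2 / w) := by
  have hsqrt : √(2 * π * ((w / 2 : ℝ≥0) : ℝ)) * √(2 * π * ((w / 2 : ℝ≥0) : ℝ)) = π * w := by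
    rw [Real.mul_self_sqrt (by positivity)]
    push_cast
    ring
  simp only [gaussianPDFReal, Complex.sq_norm, Complex.normSq_apply, Complex.sub_re,
    Complex.sub_im]
  rw [mul_mul_mul_comm, ← mul_inv, hsqrt, ← Real.exp_add]
  congr 2
  push_cast
  ring

lemma complexGaussian_eq_withDensity (a : ℂ) {w : ℝ≥0} (hw : w ≠ 0) :
    complexGaussian a w
      = volume.withDensity (fun z => ENNReal.ofReal ((π * w)⁻¹ * exp (-‖z - a‖ ^ 2 / w))) := by
  have hw2 : w / 2 ≠ 0 := by simpa using hw
  rw [complexGaussian, gaussianReal_of_var_ne_zero _ hw2, gaussianReal_of_var_ne_zero _ hw2,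
    prod_withDensity (measurable_gaussianPDF _ _) (measurable_gaussianPDF _ _),
    ← Measure.volume_eq_prod, ← (Complex.volume_preserving_equiv_real_prod.symm _).map_eq,
    ← MeasurableEquiv.map_withDensity_comp _ _ (by fun_prop)]
  congr 2
  ext p
  rw [Function.comp_apply, gaussianPDF, gaussianPDF,
    ← ENNReal.ofReal_mul (gaussianPDFReal_nonneg _ _ _), gaussianPDFReal_re_mul_gaussianPDFReal_im]
  rfl

lemma pi_complexGaussian_eq_withDensity {ι : Type*} [Fintype ι] (a : ι → ℂ) {w : ℝ≥0}
    (hw : w ≠ 0) :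
    Measure.pi (fun j => complexGaussian (a j) w)
      = volume.withDensity (fun y : ι → ℂ => ENNReal.ofReal
          ((π * w) ^ (-(Fintype.card ι : ℤ)) * exp (-(∑ j, ‖y j - a j‖ ^ 2) / w))) := by
  simp_rw [complexGaussian_eq_withDensity _ hw]
  rw [Measure.pi_withDensity _ fun j => by fun_prop, ← volume_pi]
  congr 1
  ext y
  rw [← ENNReal.ofReal_prod_of_nonneg fun j _ => by positivity, Finset.prod_mul_distrib,
    Finset.prod_const, Finset.card_univ, ← Real.exp_sum, zpow_neg, zpow_natCast, inv_pow,
    ← Finset.sum_neg_distrib, Finset.sum_div]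

section LogLikelihoodRatio

variable {ι κ : Type*} [Fintype ι] [Fintype κ]

/-- The log-likelihood ratio of `∏ₜ CN(m₁ t, w t)` against `∏ₜ CN(m₀ t, w t)` at `Y`. -/
noncomputable def logLikelihoodRatio (w : ι → ℝ≥0) (m₀ m₁ Y : ι → κ → ℂ) : ℝ :=
  ∑ t, ∑ j, (‖Y t j - m₀ t j‖ ^ 2 - ‖Y t j - m₁ t j‖ ^ 2) / w t

lemma prod_div_prod_eq_exp_logLikelihoodRatio (n : ℤ) {w : ι → ℝ≥0} (hw : ∀ t, w t ≠ 0)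
    (m₀ m₁ Y : ι → κ → ℂ) :
    (∏ t, (π * w t) ^ n * exp (-(∑ j, ‖Y t j - m₁ t j‖ ^ 2) / w t))
        / (∏ t, (π * w t) ^ n * exp (-(∑ j, ‖Y t j - m₀ t j‖ ^ 2) / w t))
      = exp (logLikelihoodRatio w m₀ m₁ Y) := by
  rw [logLikelihoodRatio, ← Finset.prod_div_distrib, Real.exp_sum]
  refine Finset.prod_congr rfl fun t _ => ?_
  have := pos_iff_ne_zero.2 (hw t)
  rw [mul_div_mul_left _ _ (by positivity), ← Real.exp_sub, ← sub_div, neg_sub_neg,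
    ← Finset.sum_sub_distrib, Finset.sum_div]

lemma logLikelihoodRatio_self_left (w : ι → ℝ≥0) (m₀ m₁ : ι → κ → ℂ) :
    logLikelihoodRatio w m₀ m₁ m₀ = -∑ t, (∑ j, ‖m₁ t j - m₀ t j‖ ^ 2) / w t := by
  simp [logLikelihoodRatio, Finset.sum_div, norm_sub_rev, neg_div]

lemma logLikelihoodRatio_self_right (w : ι → ℝ≥0) (m₀ m₁ : ι → κ → ℂ) :
    logLikelihoodRatio w m₀ m₁ m₁ = ∑ t, (∑ j, ‖m₁ t j - m₀ t j‖ ^ 2) / w t := by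
  simp [logLikelihoodRatio, Finset.sum_div]

lemma map_logLikelihoodRatio_pi_complexGaussian (a : ι → κ → ℂ) (w : ι → ℝ≥0)
    (m₀ m₁ : ι → κ → ℂ) :
    (Measure.pi fun t => Measure.pi fun j => complexGaussian (a t j) (w t)).map
        (logLikelihoodRatio w m₀ m₁)
      = gaussianReal (logLikelihoodRatio w m₀ m₁ a)
          (∑ t, ∑ j, 2 * ‖m₁ t j - m₀ t j‖₊ ^ 2 / w t) :=
  map_pi_sum_eq_gaussianReal _ (fun t => by fun_prop) fun t =>
    map_pi_sum_eq_gaussianReal _ (fun j => by fun_prop) fun j =>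
      complexGaussian_map_sq_norm_sub_sub _ _ _ _

lemma sum_sum_sq_norm_sub_div_pos {w : ι → ℝ≥0} (hw : ∀ t, w t ≠ 0) {m₀ m₁ : ι → κ → ℂ}
    (hne : ∃ t, m₁ t ≠ m₀ t) :
    0 < ∑ t, (∑ j, ‖m₁ t j - m₀ t j‖ ^ 2) / w t := by
  obtain ⟨t₀, j₀, hj₀⟩ : ∃ t j, m₁ t j ≠ m₀ t j := by
    simpa only [Ne, funext_iff, not_forall] using hne
  have hw₀ := pos_iff_ne_zero.2 (hw t₀)
  have hδ : 0 < ‖m₁ t₀ j₀ - m₀ t₀ j₀‖ := norm_pos_iff.2 (sub_ne_zero.2 hj₀)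
  refine Finset.sum_pos' (fun t _ => by positivity) ⟨t₀, Finset.mem_univ _, ?_⟩
  exact div_pos (Finset.sum_pos' (fun j _ => by positivity)
    ⟨j₀, Finset.mem_univ _, by positivity⟩) hw₀

lemma pi_complexGaussian_logLikelihoodRatio_gt (a : ι → κ → ℂ) {w : ι → ℝ≥0}
    (hw : ∀ t, w t ≠ 0) {m₀ m₁ : ι → κ → ℂ} (hne : ∃ t, m₁ t ≠ m₀ t) (c : ℝ) :
    (Measure.pi fun t => Measure.pi fun j => complexGaussian (a t j) (w t))
        {Y | logLikelihoodRatio w m₀ m₁ Y > c}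
      = ENNReal.ofReal (∫ s in Set.Ioi ((c - logLikelihoodRatio w m₀ m₁ a)
            / √(2 * ∑ t, (∑ j, ‖m₁ t j - m₀ t j‖ ^ 2) / w t)),
          exp (-s ^ 2 / 2) / √(2 * π)) := by
  have hvar : ((∑ t, ∑ j, 2 * ‖m₁ t j - m₀ t j‖₊ ^ 2 / w t : ℝ≥0) : ℝ)
      = 2 * ∑ t, (∑ j, ‖m₁ t j - m₀ t j‖ ^ 2) / w t := by
    push_cast
    simp only [Finset.mul_sum, Finset.sum_div, mul_div_assoc]
  have hvar_ne : (∑ t, ∑ j, 2 * ‖m₁ t j - m₀ t j‖₊ ^ 2 / w t : ℝ≥0) ≠ 0 := by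
    rw [← NNReal.coe_ne_zero, hvar]
    exact mul_ne_zero two_ne_zero (sum_sum_sq_norm_sub_div_pos hw hne).ne'
  rw [show {Y | logLikelihoodRatio w m₀ m₁ Y > c} = logLikelihoodRatio w m₀ m₁ ⁻¹' Set.Ioi c
    from rfl, ← Measure.map_apply (by unfold logLikelihoodRatio; fun_prop) measurableSet_Ioi,
    map_logLikelihoodRatio_pi_complexGaussian, gaussianReal_Ioi _ hvar_ne, hvar]

end LogLikelihoodRatio

theorem stmt_14_general (T N : ℕ)
    (v : Fin T → ℝ) (hv : ∀ t, 0 < v t)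
    (m₀ m₁ : Fin T → Fin N → ℂ) (hne : ∃ t, m₁ t ≠ m₀ t)
    (D : ℝ) (hD : D = ∑ t, (∑ j, ‖m₁ t j - m₀ t j‖ ^ 2) / v t)
    (f : (Fin N → ℂ) → ℝ → (Fin N → ℂ) → ℝ)
    (hf : ∀ (m : Fin N → ℂ) (w : ℝ) (y : Fin N → ℂ),
      f m w y = (Real.pi * w) ^ (-(N : ℤ)) * Real.exp (-(∑ j, ‖y j - m j‖ ^ 2) / w))
    (μ : Fin T → Fin 2 → Measure (Fin N → ℂ))
    (hμ₀ : ∀ t, μ t 0 = volume.withDensity (fun y => ENNReal.ofReal (f (m₀ t) (v t) y)))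
    (hμ₁ : ∀ t, μ t 1 = volume.withDensity (fun y => ENNReal.ofReal (f (m₁ t) (v t) y)))
    (Q : ℝ → ℝ)
    (hQ : ∀ x, Q x = ∫ s in Set.Ioi x, Real.exp (-s ^ 2 / 2) / Real.sqrt (2 * Real.pi)) :
    ∀ lam : ℝ, 0 < lam →
      Measure.pi (fun t => μ t 0)
          {Y : Fin T → Fin N → ℂ |
            (∏ t, f (m₁ t) (v t) (Y t)) / (∏ t, f (m₀ t) (v t) (Y t)) > lam}
        = ENNReal.ofReal (Q ((Real.log lam + D) / Real.sqrt (2 * D))) ∧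
      Measure.pi (fun t => μ t 1)
          {Y : Fin T → Fin N → ℂ |
            (∏ t, f (m₁ t) (v t) (Y t)) / (∏ t, f (m₀ t) (v t) (Y t)) > lam}
        = ENNReal.ofReal (Q ((Real.log lam - D) / Real.sqrt (2 * D))) := by
  intro lam hlam
  obtain ⟨w, rfl⟩ : ∃ w : Fin T → ℝ≥0, v = fun t => (w t : ℝ) :=
    ⟨fun t => (v t).toNNReal, funext fun t => (Real.coe_toNNReal _ (hv t).le).symm⟩
  beta_reduce at hv hD hμ₀ hμ₁ ⊢
  have hw : ∀ t, w t ≠ 0 := fun t => NNReal.coe_ne_zero.1 (hv t).ne'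
  have hμ : ∀ (a : Fin T → Fin N → ℂ) t,
      volume.withDensity (fun y => ENNReal.ofReal (f (a t) (w t) y))
        = Measure.pi fun j => complexGaussian (a t j) (w t) := fun a t => by
    simp only [hf]
    rw [pi_complexGaussian_eq_withDensity _ (hw t), Fintype.card_fin]
  have hevent : {Y : Fin T → Fin N → ℂ |
        (∏ t, f (m₁ t) (w t) (Y t)) / (∏ t, f (m₀ t) (w t) (Y t)) > lam}
      = {Y | logLikelihoodRatio w m₀ m₁ Y > Real.log lam} := by
    ext Y
    simp only [hf, Set.mem_ofPred_eq, gt_iff_lt,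
      prod_div_prod_eq_exp_logLikelihoodRatio _ hw, Real.log_lt_iff_lt_exp hlam]
  simp only [hevent, hμ₀, hμ₁, hμ m₀, hμ m₁, pi_complexGaussian_logLikelihoodRatio_gt _ hw hne,
    logLikelihoodRatio_self_left, logLikelihoodRatio_self_right, ← hD, hQ, sub_neg_eq_add, and_self]

/-- Tracking LVS (Theorem 4): error rates of the likelihood ratio test over `T`
independent time slots of equal-covariance complex Gaussian observations. -/
theorem stmt_14 (T N : ℕ) (hT : 1 ≤ T) (hN : 1 ≤ N)
    (v : Fin T → ℝ) (hv : ∀ t, 0 < v t)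
    (m₀ m₁ : Fin T → Fin N → ℂ) (hne : ∃ t, m₁ t ≠ m₀ t)
    (D : ℝ) (hD : D = ∑ t, (∑ j, ‖m₁ t j - m₀ t j‖ ^ 2) / v t)
    (f : (Fin N → ℂ) → ℝ → (Fin N → ℂ) → ℝ)
    (hf : ∀ (m : Fin N → ℂ) (w : ℝ) (y : Fin N → ℂ),
      f m w y = (Real.pi * w) ^ (-(N : ℤ)) * Real.exp (-(∑ j, ‖y j - m j‖ ^ 2) / w))
    (μ : Fin T → Fin 2 → Measure (Fin N → ℂ))
    (hμ₀ : ∀ t, μ t 0 = volume.withDensity (fun y => ENNReal.ofReal (f (m₀ t) (v t) y)))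
    (hμ₁ : ∀ t, μ t 1 = volume.withDensity (fun y => ENNReal.ofReal (f (m₁ t) (v t) y)))
    (Q : ℝ → ℝ)
    (hQ : ∀ x, Q x = ∫ s in Set.Ioi x, Real.exp (-s ^ 2 / 2) / Real.sqrt (2 * Real.pi)) :
    ∀ lam : ℝ, 0 < lam →
      Measure.pi (fun t => μ t 0)
          {Y : Fin T → Fin N → ℂ |
            (∏ t, f (m₁ t) (v t) (Y t)) / (∏ t, f (m₀ t) (v t) (Y t)) > lam}
        = ENNReal.ofReal (Q ((Real.log lam + D) / Real.sqrt (2 * D))) ∧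
      Measure.pi (fun t => μ t 1)
          {Y : Fin T → Fin N → ℂ |
            (∏ t, f (m₁ t) (v t) (Y t)) / (∏ t, f (m₀ t) (v t) (Y t)) > lam}
        = ENNReal.ofReal (Q ((Real.log lam - D) / Real.sqrt (2 * D))) :=
  stmt_14_general T N v hv m₀ m₁ hne D hD f hf μ hμ₀ hμ₁ Q hQ
end

section
/- Let Q(x) = ∫_x^∞ (2π)^{−1/2}·e^{−t²/2} dt be the standard normal tail function. Let 0 < D < D' and let λ, λ' > 0 satisfy (ln λ + D)/√(2D) = (ln λ' + D')/√(2D') (i.e., the two tests have equal false positive rate Q((ln λ + D)/√(2D)) = Q((ln λ' + D')/√(2D'))). Then Q((ln λ' − D')/√(2D')) > Q((ln λ − D)/√(2D)); that is, the detection rate at KL divergence D' strictly exceeds the detection rate at KL divergence D. -/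
/-!
Write `s = √(2D)`. Since `(ln λ - D)/s = (ln λ + D)/s - s`, fixing the false positive argument
`(ln λ + D)/s` makes the detection argument decrease strictly as `s` grows with `D`; the tail
function `Q` is strictly decreasing because the Gaussian density is positive.
-/

open MeasureTheory Set

lemma integrable_exp_neg_sq_div_two_div_sqrt :
    Integrable fun t : ℝ => Real.exp (-t ^ 2 / 2) / Real.sqrt (2 * Real.pi) := by
  refine ((integrable_exp_neg_mul_sq (b := 1 / 2) (by norm_num)).div_const
    (Real.sqrt (2 * Real.pi))).congr (ae_of_all _ fun t => ?_)
  ring_nf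

lemma strictAnti_setIntegral_Ioi {f : ℝ → ℝ} (hf : Integrable f) (hpos : ∀ t, 0 < f t) :
    StrictAnti fun x => ∫ t in Ioi x, f t := by
  intro x y hxy
  have hsplit : ∫ t in Ioi x, f t = (∫ t in Ioc x y, f t) + ∫ t in Ioi y, f t := by
    rw [← setIntegral_union (Ioc_disjoint_Ioi le_rfl) measurableSet_Ioi hf.integrableOn
      hf.integrableOn, Ioc_union_Ioi_eq_Ioi hxy.le]
  have hmiddle : 0 < ∫ t in Ioc x y, f t := by
    rw [← intervalIntegral.integral_of_le hxy.le]
    exact intervalIntegral.intervalIntegral_pos_of_pos hf.intervalIntegrable hpos hxy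
  simp only [hsplit]
  linarith

/-- Holds for every real `D`: when `D ≤ 0` both sides vanish, since `√(2D) = 0`. -/
lemma sub_div_sqrt_two_mul (a D : ℝ) :
    (a - D) / Real.sqrt (2 * D) = (a + D) / Real.sqrt (2 * D) - Real.sqrt (2 * D) := by
  rcases le_or_gt D 0 with hD | hD
  · simp [Real.sqrt_eq_zero'.2 (by linarith : 2 * D ≤ 0)]
  · have hs : Real.sqrt (2 * D) ≠ 0 := (Real.sqrt_pos.2 (by linarith)).ne'
    field_simp
    rw [Real.sq_sqrt (by linarith)]
    ring

theorem stmt_16_general (Q : ℝ → ℝ)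
    (hQ : ∀ x, Q x = ∫ t in Set.Ioi x, Real.exp (-t ^ 2 / 2) / Real.sqrt (2 * Real.pi))
    (D D' : ℝ) (hD : 0 < D) (hDD' : D < D')
    (lam lam' : ℝ)
    (heq : (Real.log lam + D) / Real.sqrt (2 * D)
        = (Real.log lam' + D') / Real.sqrt (2 * D')) :
    Q ((Real.log lam' - D') / Real.sqrt (2 * D'))
      > Q ((Real.log lam - D) / Real.sqrt (2 * D)) := by
  rw [hQ, hQ]
  refine strictAnti_setIntegral_Ioi integrable_exp_neg_sq_div_two_div_sqrt
    (fun t => by positivity) ?_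
  have hsqrt : Real.sqrt (2 * D) < Real.sqrt (2 * D') :=
    Real.sqrt_lt_sqrt (by linarith) (by linarith)
  rw [sub_div_sqrt_two_mul, sub_div_sqrt_two_mul, ← heq]
  linarith

/-- At any fixed false positive rate, the detection rate of the LVS is strictly
increasing in the Kullback–Leibler divergence `D`. -/
theorem stmt_16 (Q : ℝ → ℝ)
    (hQ : ∀ x, Q x = ∫ t in Set.Ioi x, Real.exp (-t ^ 2 / 2) / Real.sqrt (2 * Real.pi))
    (D D' : ℝ) (hD : 0 < D) (hDD' : D < D')
    (lam lam' : ℝ) (hlam : 0 < lam) (hlam' : 0 < lam')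
    (heq : (Real.log lam + D) / Real.sqrt (2 * D)
        = (Real.log lam' + D') / Real.sqrt (2 * D')) :
    Q ((Real.log lam' - D') / Real.sqrt (2 * D'))
      > Q ((Real.log lam - D) / Real.sqrt (2 * D)) :=
  stmt_16_general Q hQ D D' hD hDD' lam lam' heq
end
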